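/- Let J^i_j : U → ℝ (1 ≤ i, j ≤ 6) be differentiable functions satisfying J^1_1 = 0, J^2_1 = cos(u³)/sin(u¹), J^3_1 = -cos(u²) sin(u³)/(sin(u¹) sin(u²)), J^1_2 = -sin(u¹) cos(u³), and J^1_3 = sin(u¹) cos(u²) sin(u²) sin(u³), and let a, c : U → ℝ be differentiable. Suppose the identity a·c·Σ_{k,s} g^{ks} J^l_s ∂J^j_i/∂u^k + c·Σ_{k,s} (∂a/∂u^k) g^{ks} J^l_s J^j_i = 0 holds on U for the index choices (i, l, j) = (1, 1, 2) and (i, l, j) = (1, 1, 3). Then a·c ≡ 0 on U. -/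

import Mathlib

/-! Write `α♯f = ∑ g^{ks} α_s ∂_k f` (`sharpDeriv α f`). Both identities contain the unknown term `c · (J¹)♯a`,
multiplied by `J²₁` and `J³₁` respectively, so eliminating it leaves
`a c ((J¹)♯J²₁ · J³₁ - (J¹)♯J³₁ · J²₁) = 0`. Only `J¹₁, J¹₂, J¹₃` and the derivatives of `J²₁, J³₁`
enter the bracket, which evaluates to `sin u³ (cos² u² + cos² u³) / (sin³ u¹ sin² u²)`; this is
nonzero off the hyperplane `u² = π/2`, and `a c` vanishes there too by continuity. -/

open Real

noncomputable section

/-- The `k`-th partial derivative of a function `f : ℝ⁶ → ℝ` at a point `x`. -/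
def pder {n : ℕ} (k : Fin n) (f : (Fin n → ℝ) → ℝ) (x : Fin n → ℝ) : ℝ :=
  fderiv ℝ f x (Pi.single k 1)

/-- The spherical coordinates domain `U = (0,π)⁵ × (0,2π) ⊆ ℝ⁶`. -/
def sphDomain : Set (Fin 6 → ℝ) :=
  {x | (∀ i : Fin 6, (i : ℕ) < 5 → x i ∈ Set.Ioo 0 π) ∧ x 5 ∈ Set.Ioo 0 (2 * π)}

/-- The components `g^{ij}` of the inverse round metric of `S⁶` in spherical coordinates
(indices `0,…,5` correspond to `1,…,6`): `g^{ij} = 0` for `i ≠ j` and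
`g^{ii} = 1/(sin²(u¹)⋯sin²(u^{i-1}))`. -/
def ginv (i j : Fin 6) (x : Fin 6 → ℝ) : ℝ :=
  if i = j then (∏ m ∈ Finset.univ.filter (fun m : Fin 6 => m < i), Real.sin (x m) ^ 2)⁻¹ else 0

open Filter Topology

section PartialDerivative

variable {n : ℕ} {k : Fin n} {f g : (Fin n → ℝ) → ℝ} {x : Fin n → ℝ}

theorem pder_congr (h : f =ᶠ[𝓝 x] g) : pder k f x = pder k g x := by
  rw [pder, pder, h.fderiv_eq]

theorem pder_comp_apply (k i : Fin n) {φ : ℝ → ℝ} {φ' : ℝ} (hφ : HasDerivAt φ φ' (x i)) :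
    pder k (fun y => φ (y i)) x = if k = i then φ' else 0 := by
  have hd : HasFDerivAt (fun y : Fin n → ℝ => φ (y i))
      (φ' • ContinuousLinearMap.proj (R := ℝ) (φ := fun _ : Fin n => ℝ) i) x := by
    simpa [Function.comp_def] using
      hφ.comp_hasFDerivAt (f := fun y : Fin n → ℝ => y i) x (hasFDerivAt_apply i x)
  rw [pder, hd.fderiv]
  simp [Pi.single_apply, eq_comm]

theorem pder_mul (hf : DifferentiableAt ℝ f x) (hg : DifferentiableAt ℝ g x) :
    pder k (fun y => f y * g y) x = pder k f x * g x + f x * pder k g x := by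
  rw [pder, fderiv_fun_mul hf hg, pder, pder]
  simp only [add_apply, smul_apply, smul_eq_mul]
  ring

end PartialDerivative

theorem ContinuousAt.eq_of_eventually_update_eq {ι X Y : Type*} [DecidableEq ι]
    [TopologicalSpace X] [TopologicalSpace Y] [T2Space Y] {f : (ι → X) → Y} {x : ι → X} {i : ι}
    [(𝓝[≠] x i).NeBot] {y : Y} (hf : ContinuousAt f x)
    (h : ∀ᶠ t in 𝓝[≠] x i, f (Function.update x i t) = y) : f x = y := by
  have hupdate : Tendsto (Function.update x i) (𝓝[≠] x i) (𝓝 x) :=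
    ((continuous_const.update i continuous_id).tendsto' (x i) x
      (Function.update_eq_self i x)).mono_left nhdsWithin_le_nhds
  exact tendsto_nhds_unique (hf.tendsto.comp hupdate)
    (tendsto_const_nhds.congr' (h.mono fun _ ht => ht.symm))

section SphericalCoordinates

def sharpDeriv (α : Fin 6 → (Fin 6 → ℝ) → ℝ) (f : (Fin 6 → ℝ) → ℝ) (x : Fin 6 → ℝ) : ℝ :=
  ∑ k : Fin 6, ∑ s : Fin 6, ginv k s x * α s x * pder k f x

variable {α : Fin 6 → (Fin 6 → ℝ) → ℝ} {f : (Fin 6 → ℝ) → ℝ} {x : Fin 6 → ℝ}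

theorem sharpDeriv_eq_sum_diag :
    sharpDeriv α f x = ∑ k : Fin 6, ginv k k x * α k x * pder k f x := by
  simp [sharpDeriv, ginv, ite_mul]

theorem sum_pder_mul_ginv_mul (r : ℝ) :
    ∑ k : Fin 6, ∑ s : Fin 6, pder k f x * ginv k s x * α s x * r = sharpDeriv α f x * r := by
  simp only [sharpDeriv, Finset.sum_mul]
  exact Finset.sum_congr rfl fun k _ => Finset.sum_congr rfl fun s _ => by ring

theorem ginv_one_one : ginv 1 1 x = (sin (x 0) ^ 2)⁻¹ := by
  simp [ginv, Finset.prod_filter]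

theorem ginv_two_two : ginv 2 2 x = (sin (x 0) ^ 2 * sin (x 1) ^ 2)⁻¹ := by
  simp [ginv, Finset.prod_filter, Fin.prod_univ_six]

theorem isOpen_sphDomain : IsOpen sphDomain := by
  simp only [sphDomain, Set.ofPred_and, Set.ofPred_forall]
  exact (isOpen_iInter_of_finite fun i => isOpen_iInter_of_finite fun _ =>
    isOpen_Ioo.preimage (continuous_apply i)).inter (isOpen_Ioo.preimage (continuous_apply 5))

theorem sin_pos_of_mem_sphDomain (hx : x ∈ sphDomain) {i : Fin 6} (hi : (i : ℕ) < 5) :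
    0 < sin (x i) :=
  sin_pos_of_pos_of_lt_pi (hx.1 i hi).1 (hx.1 i hi).2

theorem update_mem_sphDomain (hx : x ∈ sphDomain) {i : Fin 6} (hi : (i : ℕ) < 5) {t : ℝ}
    (ht : t ∈ Set.Ioo 0 π) : Function.update x i t ∈ sphDomain := by
  refine ⟨fun j hj => ?_, ?_⟩
  · rcases eq_or_ne j i with rfl | hji
    · simpa using ht
    · simpa [hji] using hx.1 j hj
  · have : (5 : Fin 6) ≠ i := fun h => by simp [← h] at hi
    simpa [this] using hx.2

theorem sharpDeriv_cos_div_sin (hα : α 0 x = 0) (hs₀ : sin (x 0) ≠ 0) :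
    sharpDeriv α (fun y => cos (y 2) / sin (y 0)) x
      = -(ginv 2 2 x * α 2 x * sin (x 2) / sin (x 0)) := by
  have hcos : HasDerivAt cos (-sin (x 2)) (x 2) := hasDerivAt_cos _
  have hinv : HasDerivAt (fun t => (sin t)⁻¹) (-cos (x 0) / sin (x 0) ^ 2) (x 0) :=
    (hasDerivAt_sin _).inv hs₀
  have hpder (k : Fin 6) : pder k (fun y => cos (y 2) / sin (y 0)) x
      = (if k = 2 then -sin (x 2) else 0) * (sin (x 0))⁻¹
        + cos (x 2) * (if k = 0 then -cos (x 0) / sin (x 0) ^ 2 else 0) := by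
    simp_rw [div_eq_mul_inv (cos _)]
    rw [pder_mul (by fun_prop) (by fun_prop (disch := exact hs₀)),
      pder_comp_apply k 2 hcos, pder_comp_apply k 0 hinv]
  simp [sharpDeriv_eq_sum_diag, Fin.sum_univ_six, hpder, hα]
  ring

theorem sharpDeriv_neg_cos_mul_sin_div (hα : α 0 x = 0) (hs₀ : sin (x 0) ≠ 0)
    (hs₁ : sin (x 1) ≠ 0) :
    sharpDeriv α (fun y => -(cos (y 1) * sin (y 2)) / (sin (y 0) * sin (y 1))) x
      = ginv 1 1 x * α 1 x * sin (x 2) / (sin (x 0) * sin (x 1) ^ 2)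
        - ginv 2 2 x * α 2 x * cos (x 1) * cos (x 2) / (sin (x 0) * sin (x 1)) := by
  have hcot : HasDerivAt (fun t => -cos t / sin t) ((sin (x 1) ^ 2)⁻¹) (x 1) := by
    refine ((hasDerivAt_cos _).fun_neg.fun_div (hasDerivAt_sin _) hs₁).congr_deriv ?_
    field_simp
    linear_combination sin_sq_add_cos_sq (x 1)
  have hsin : HasDerivAt sin (cos (x 2)) (x 2) := hasDerivAt_sin _
  have hinv : HasDerivAt (fun t => (sin t)⁻¹) (-cos (x 0) / sin (x 0) ^ 2) (x 0) :=
    (hasDerivAt_sin _).inv hs₀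
  have hf : (fun y : Fin 6 → ℝ => -(cos (y 1) * sin (y 2)) / (sin (y 0) * sin (y 1)))
      = fun y => -cos (y 1) / sin (y 1) * sin (y 2) * (sin (y 0))⁻¹ := by
    ext y
    ring
  have hpder (k : Fin 6) : pder k (fun y => -(cos (y 1) * sin (y 2)) / (sin (y 0) * sin (y 1))) x
      = ((if k = 1 then (sin (x 1) ^ 2)⁻¹ else 0) * sin (x 2)
          + -cos (x 1) / sin (x 1) * (if k = 2 then cos (x 2) else 0)) * (sin (x 0))⁻¹
        + -cos (x 1) / sin (x 1) * sin (x 2)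
          * (if k = 0 then -cos (x 0) / sin (x 0) ^ 2 else 0) := by
    rw [hf, pder_mul (by fun_prop (disch := exact hs₁)) (by fun_prop (disch := exact hs₀)),
      pder_mul (by fun_prop (disch := exact hs₁)) (by fun_prop),
      pder_comp_apply k 1 hcot, pder_comp_apply k 2 hsin, pder_comp_apply k 0 hinv]
  simp [sharpDeriv_eq_sum_diag, Fin.sum_univ_six, hpder, hα]
  field_simp
  ring

theorem sharpDeriv_congr {g : (Fin 6 → ℝ) → ℝ} (h : f =ᶠ[𝓝 x] g) :
    sharpDeriv α f x = sharpDeriv α g x := by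
  simp only [sharpDeriv, pder_congr h]

theorem sharpDeriv_mul_sub_mul_eq {f₁ f₂ : (Fin 6 → ℝ) → ℝ}
    (hs₀ : sin (x 0) ≠ 0) (hs₁ : sin (x 1) ≠ 0) (hα₀ : α 0 x = 0)
    (hα₁ : α 1 x = -(sin (x 0) * cos (x 2)))
    (hα₂ : α 2 x = sin (x 0) * cos (x 1) * sin (x 1) * sin (x 2))
    (hf₁ : f₁ =ᶠ[𝓝 x] fun y => cos (y 2) / sin (y 0))
    (hf₂ : f₂ =ᶠ[𝓝 x] fun y => -(cos (y 1) * sin (y 2)) / (sin (y 0) * sin (y 1))) :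
    sharpDeriv α f₁ x * f₂ x - sharpDeriv α f₂ x * f₁ x
      = sin (x 2) * (cos (x 1) ^ 2 + cos (x 2) ^ 2) / (sin (x 0) ^ 3 * sin (x 1) ^ 2) := by
  rw [sharpDeriv_congr hf₁, sharpDeriv_congr hf₂, sharpDeriv_cos_div_sin hα₀ hs₀,
    sharpDeriv_neg_cos_mul_sin_div hα₀ hs₀ hs₁, hf₁.eq_of_nhds, hf₂.eq_of_nhds,
    ginv_one_one, ginv_two_two, hα₁, hα₂]
  field_simp
  linear_combination sin (x 2) * cos (x 1) ^ 2 * sin_sq_add_cos_sq (x 2)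

end SphericalCoordinates

theorem ac_vanishes_general (J : Fin 6 → Fin 6 → (Fin 6 → ℝ) → ℝ)
    (hJ11 : ∀ x ∈ sphDomain, J 0 0 x = 0)
    (hJ21 : ∀ x ∈ sphDomain, J 1 0 x = Real.cos (x 2) / Real.sin (x 0))
    (hJ31 : ∀ x ∈ sphDomain,
      J 2 0 x = -(Real.cos (x 1) * Real.sin (x 2)) / (Real.sin (x 0) * Real.sin (x 1)))
    (hJ12 : ∀ x ∈ sphDomain, J 0 1 x = -(Real.sin (x 0) * Real.cos (x 2)))
    (hJ13 : ∀ x ∈ sphDomain,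
      J 0 2 x = Real.sin (x 0) * Real.cos (x 1) * Real.sin (x 1) * Real.sin (x 2))
    (a c : (Fin 6 → ℝ) → ℝ)
    (ha : ∀ x ∈ sphDomain, DifferentiableAt ℝ a x)
    (hc : ∀ x ∈ sphDomain, DifferentiableAt ℝ c x)
    (hid : ∀ i l j : Fin 6, ((i, l, j) = (0, 0, 1) ∨ (i, l, j) = (0, 0, 2)) →
      ∀ x ∈ sphDomain,
        a x * c x * (∑ k : Fin 6, ∑ s : Fin 6, ginv k s x * J l s x * pder k (J j i) x)
        + c x * (∑ k : Fin 6, ∑ s : Fin 6, pder k a x * ginv k s x * J l s x * J j i x)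
          = 0) :
    ∀ x ∈ sphDomain, a x * c x = 0 := by
  have hgeneric : ∀ x ∈ sphDomain, cos (x 1) ≠ 0 → a x * c x = 0 := by
    intro x hx hcos
    have hs₀ := sin_pos_of_mem_sphDomain hx (i := 0) (by norm_num)
    have hs₁ := sin_pos_of_mem_sphDomain hx (i := 1) (by norm_num)
    have hs₂ := sin_pos_of_mem_sphDomain hx (i := 2) (by norm_num)
    have hU : ∀ᶠ y in 𝓝 x, y ∈ sphDomain := isOpen_sphDomain.mem_nhds hx
    have h₁ := hid 0 0 1 (Or.inl rfl) x hx
    have h₂ := hid 0 0 2 (Or.inr rfl) x hx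
    rw [sum_pder_mul_ginv_mul, ← sharpDeriv] at h₁ h₂
    -- the combination cancels the unknown term `sharpDeriv (J 0) a x`
    have helim : a x * c x * (sharpDeriv (J 0) (J 1 0) x * J 2 0 x
        - sharpDeriv (J 0) (J 2 0) x * J 1 0 x) = 0 := by
      linear_combination J 2 0 x * h₁ - J 1 0 x * h₂
    rw [sharpDeriv_mul_sub_mul_eq hs₀.ne' hs₁.ne' (hJ11 x hx) (hJ12 x hx) (hJ13 x hx)
      (hU.mono hJ21) (hU.mono hJ31)] at helim
    exact (mul_eq_zero.1 helim).resolve_right (by positivity)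
  intro x hx
  by_cases hcos : cos (x 1) = 0
  · have hx₁ : x 1 ∈ Set.Ioo 0 π := hx.1 1 (by norm_num)
    refine ((ha x hx).continuousAt.mul (hc x hx).continuousAt).eq_of_eventually_update_eq
      (i := 1) ?_
    filter_upwards [nhdsWithin_le_nhds (Ioo_mem_nhds hx₁.1 hx₁.2), self_mem_nhdsWithin]
      with t ht hne
    refine hgeneric _ (update_mem_sphDomain hx (by norm_num) ht) ?_
    rw [Function.update_self, ← hcos]
    exact injOn_cos.ne (Set.Ioo_subset_Icc_self ht) (Set.Ioo_subset_Icc_self hx₁) hne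
  · exact hgeneric x hx hcos

/-- If the integrability identity of Proposition 3.3 (with `b = 0`) holds on `U` for the
index choices `(i,l,j) = (1,1,2)` and `(1,1,3)` (here `0`-indexed: `(0,0,1)` and `(0,0,2)`),
where `J i j` stands for the component `J^i_j` of the almost complex structure of `S⁶`
induced by the octonion product, then `a·c ≡ 0` on `U`. -/
theorem ac_vanishes (J : Fin 6 → Fin 6 → (Fin 6 → ℝ) → ℝ)
    (hJdiff : ∀ i j : Fin 6, ∀ x ∈ sphDomain, DifferentiableAt ℝ (J i j) x)
    (hJ11 : ∀ x ∈ sphDomain, J 0 0 x = 0)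
    (hJ21 : ∀ x ∈ sphDomain, J 1 0 x = Real.cos (x 2) / Real.sin (x 0))
    (hJ31 : ∀ x ∈ sphDomain,
      J 2 0 x = -(Real.cos (x 1) * Real.sin (x 2)) / (Real.sin (x 0) * Real.sin (x 1)))
    (hJ12 : ∀ x ∈ sphDomain, J 0 1 x = -(Real.sin (x 0) * Real.cos (x 2)))
    (hJ13 : ∀ x ∈ sphDomain,
      J 0 2 x = Real.sin (x 0) * Real.cos (x 1) * Real.sin (x 1) * Real.sin (x 2))
    (a c : (Fin 6 → ℝ) → ℝ)
    (ha : ∀ x ∈ sphDomain, DifferentiableAt ℝ a x)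
    (hc : ∀ x ∈ sphDomain, DifferentiableAt ℝ c x)
    (hid : ∀ i l j : Fin 6, ((i, l, j) = (0, 0, 1) ∨ (i, l, j) = (0, 0, 2)) →
      ∀ x ∈ sphDomain,
        a x * c x * (∑ k : Fin 6, ∑ s : Fin 6, ginv k s x * J l s x * pder k (J j i) x)
        + c x * (∑ k : Fin 6, ∑ s : Fin 6, pder k a x * ginv k s x * J l s x * J j i x)
          = 0) :
    ∀ x ∈ sphDomain, a x * c x = 0 :=
  ac_vanishes_general J hJ11 hJ21 hJ31 hJ12 hJ13 a c ha hc hid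

end
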